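/- arXiv:1410.3858 — 5 statements merged into one kernel-verified Lean document; each statement's English description precedes it below -/
import Mathlib

section
/- Let ψ : [1,∞) → (0,∞) be a positive, continuous, convex, decreasing function tending to 0 at infinity, let 1 < s < ∞ with 1/s + 1/s' = 1, and suppose Σ_{k=1}^∞ ψ(k)^s k^{s-2} < ∞. Let g(t) = ψ(t)·t^{1/s'} and suppose there is α > 0 such that g(t)/(t·|g'(t+0)|) ≥ α for all t ≥ n. Then ψ(n)^s · n^{s-1} ≤ (s/α) · Σ_{k=n}^∞ ψ(k)^s k^{s-2}. -/
/-!
Put `G(t) = g(t)^s = ψ(t)^s t^(s-1)`. The condition `α(g;t) ≥ α` bounds the right derivative by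
`|g'(t+0)| ≤ g(t)/(α t)`, and `g(t)/t = ψ(t) t^(-1/s)` decreases, so the mean value theorem gives
`g(k) - g(k+1) ≤ g(k)/(α k)`; by convexity of `x ↦ x^s` this becomes
`G(k) - G(k+1) ≤ (s/α) G(k)/k`. Telescoping from `n` gives
`G(n) ≤ G(n+m) + (s/α) ∑_{n≤k<n+m} G(k)/k`, and `G(k)` gets arbitrarily small because `∑ G(k)/k`
converges while the harmonic series does not.
-/

open Set Filter

theorem rpow_sub_rpow_le_of_sub_le_mul {a b δ s : ℝ} (ha : 0 < a) (hb : 0 ≤ b) (hs : 1 ≤ s)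
    (hab : a - b ≤ δ * a) : a ^ s - b ^ s ≤ s * δ * a ^ s := by
  have hba : -1 ≤ b / a - 1 := by linarith [div_nonneg hb ha.le]
  have bernoulli := one_add_mul_self_le_rpow_one_add hba hs
  rw [add_sub_cancel, Real.div_rpow hb ha.le, le_div_iff₀ (by positivity)] at bernoulli
  have hδ : -δ ≤ b / a - 1 := by
    rw [div_sub_one ha.ne', le_div_iff₀ ha]
    linarith
  nlinarith [mul_le_mul_of_nonneg_left hδ (by positivity : 0 ≤ s * a ^ s)]

theorem mul_rpow_conjExponent {x t s s' : ℝ} (hx : 0 ≤ x) (ht : 0 ≤ t) (hs : s ≠ 0)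
    (hss' : 1 / s + 1 / s' = 1) : (x * t ^ (1 / s')) ^ s = x ^ s * t ^ (s - 1) := by
  have hexp : 1 / s' * s = s - 1 := by
    rw [show 1 / s' = 1 - 1 / s by linarith]
    field_simp
  rw [Real.mul_rpow hx (Real.rpow_nonneg ht _), ← Real.rpow_mul ht, hexp]

theorem antitoneOn_mul_rpow_of_nonpos {ψ : ℝ → ℝ} {S : Set ℝ} {p : ℝ} (hS : S ⊆ Ioi 0)
    (hψ : AntitoneOn ψ S) (hψ0 : ∀ t ∈ S, 0 ≤ ψ t) (hp : p ≤ 0) :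
    AntitoneOn (fun t => ψ t * t ^ p) S := fun x hx _ hy hxy =>
  mul_le_mul (hψ hx hy hxy) (Real.rpow_le_rpow_of_nonpos (hS hx) hxy hp)
    (Real.rpow_nonneg (hS hy).le _) (hψ0 x hx)

theorem exists_lt_of_summable_div_natCast_add {F : ℕ → ℝ} {n : ℕ}
    (hsum : Summable fun j => F j / ((n + j : ℕ) : ℝ)) {ε : ℝ} (hε : 0 < ε) : ∃ j, F j < ε := by
  by_contra! hF
  have hharm : Summable fun j => ε / ((j + n : ℕ) : ℝ) := by
    refine Summable.of_nonneg_of_le (fun j => by positivity) (fun j => ?_) hsum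
    rw [Nat.add_comm]
    exact div_le_div_of_nonneg_right (hF j) (Nat.cast_nonneg _)
  refine Real.not_summable_natCast_inv ((summable_nat_add_iff n).1 ?_)
  exact (hharm.mul_left ε⁻¹).congr fun j => by field_simp

theorem le_mul_tsum_div_of_le_succ_add {F : ℕ → ℝ} {n : ℕ} {K : ℝ} (hK : 0 ≤ K)
    (hF : ∀ j, 0 ≤ F j) (hsum : Summable fun j => F j / ((n + j : ℕ) : ℝ))
    (hstep : ∀ j, F j ≤ F (j + 1) + K * (F j / ((n + j : ℕ) : ℝ))) :
    F 0 ≤ K * ∑' j, F j / ((n + j : ℕ) : ℝ) := by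
  have htelescope : ∀ m, F 0 ≤ F m + K * ∑ j ∈ Finset.range m, F j / ((n + j : ℕ) : ℝ) := by
    intro m
    induction m with
    | zero => simp
    | succ m ih =>
      rw [Finset.sum_range_succ, mul_add]
      linarith [hstep m]
  refine le_of_forall_pos_le_add fun ε hε => ?_
  obtain ⟨m, hm⟩ := exists_lt_of_summable_div_natCast_add hsum hε
  have hpartial := hsum.sum_le_tsum (Finset.range m) fun j _ =>
    div_nonneg (hF j) (Nat.cast_nonneg _)
  nlinarith [htelescope m, mul_le_mul_of_nonneg_left hpartial hK]

-- The paper's `α(g;t)`: `derivWithin g (Ici t) t` is the right derivative `g'(t+0)`.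
noncomputable def decayCharacteristic (g : ℝ → ℝ) (t : ℝ) : ℝ :=
  g t / (t * |derivWithin g (Ici t) t|)

section decayCharacteristic

variable {g : ℝ → ℝ} {α : ℝ}

theorem DifferentiableWithinAt.of_le_decayCharacteristic {x : ℝ} (hα : 0 < α)
    (h : α ≤ decayCharacteristic g x) : DifferentiableWithinAt ℝ g (Ici x) x := by
  by_contra hg
  rw [decayCharacteristic, derivWithin_zero_of_not_differentiableWithinAt hg] at h
  simp only [abs_zero, mul_zero, div_zero] at h
  linarith

theorem abs_derivWithin_le_of_le_decayCharacteristic {x : ℝ} (hx : 0 < x) (hα : 0 < α)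
    (h : α ≤ decayCharacteristic g x) : |derivWithin g (Ici x) x| ≤ g x / (α * x) := by
  rw [decayCharacteristic] at h
  rcases (abs_nonneg (derivWithin g (Ici x) x)).eq_or_lt with h0 | hpos
  · rw [← h0] at h ⊢
    simp only [mul_zero, div_zero] at h
    linarith
  rw [le_div_iff₀ (by positivity)]
  rw [le_div_iff₀ (by positivity)] at h
  linarith

theorem sub_le_of_le_decayCharacteristic {a b : ℝ} (ha : 0 < a) (hα : 0 < α) (hab : a ≤ b)
    (hcont : ContinuousOn g (Icc a b)) (hanti : AntitoneOn (fun x => g x / x) (Icc a b))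
    (hchar : ∀ x ∈ Ico a b, α ≤ decayCharacteristic g x) :
    g a - g b ≤ g a / (α * a) * (b - a) := by
  have hbound : ∀ x ∈ Ico a b, ‖derivWithin g (Ici x) x‖ ≤ g a / (α * a) := by
    intro x hx
    calc ‖derivWithin g (Ici x) x‖ ≤ g x / (α * x) :=
          abs_derivWithin_le_of_le_decayCharacteristic (ha.trans_le hx.1) hα (hchar x hx)
      _ = g x / x / α := by rw [div_div, mul_comm]
      _ ≤ g a / a / α := div_le_div_of_nonneg_right
          (hanti (left_mem_Icc.2 hab) (Ico_subset_Icc_self hx) hx.1) hα.le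
      _ = g a / (α * a) := by rw [div_div, mul_comm]
  have hderiv : ∀ x ∈ Ico a b, HasDerivWithinAt g (derivWithin g (Ici x) x) (Ici x) x :=
    fun x hx => (DifferentiableWithinAt.of_le_decayCharacteristic hα (hchar x hx)).hasDerivWithinAt
  have hmvt := norm_image_sub_le_of_norm_deriv_right_le_segment hcont hderiv hbound b
    (right_mem_Icc.2 hab)
  rw [Real.norm_eq_abs, abs_sub_comm] at hmvt
  exact (le_abs_self _).trans hmvt

theorem rpow_le_rpow_add_one_add_of_le_decayCharacteristic {x s : ℝ} (hx : 0 < x) (hα : 0 < α)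
    (hs : 1 ≤ s) (hgx : 0 < g x) (hgx' : 0 ≤ g (x + 1)) (hcont : ContinuousOn g (Icc x (x + 1)))
    (hanti : AntitoneOn (fun t => g t / t) (Icc x (x + 1)))
    (hchar : ∀ t ∈ Ico x (x + 1), α ≤ decayCharacteristic g t) :
    g x ^ s ≤ g (x + 1) ^ s + s / α * (g x ^ s / x) := by
  have hsub := sub_le_of_le_decayCharacteristic hx hα (by linarith) hcont hanti hchar
  rw [add_sub_cancel_left, mul_one, div_eq_mul_one_div, mul_comm] at hsub
  have hpow := rpow_sub_rpow_le_of_sub_le_mul hgx hgx' hs hsub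
  have hrw : s * (1 / (α * x)) * g x ^ s = s / α * (g x ^ s / x) := by ring
  linarith

theorem rpow_le_mul_tsum_of_le_decayCharacteristic {s : ℝ} {n : ℕ} (hn : 0 < n) (hα : 0 < α)
    (hs : 1 ≤ s) (hpos : ∀ t ∈ Ici (n : ℝ), 0 < g t) (hcont : ContinuousOn g (Ici (n : ℝ)))
    (hanti : AntitoneOn (fun t => g t / t) (Ici (n : ℝ)))
    (hchar : ∀ t ∈ Ici (n : ℝ), α ≤ decayCharacteristic g t)
    (hsum : Summable fun j => g ((n + j : ℕ) : ℝ) ^ s / ((n + j : ℕ) : ℝ)) :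
    g n ^ s ≤ s / α * ∑' j, g ((n + j : ℕ) : ℝ) ^ s / ((n + j : ℕ) : ℝ) := by
  have hmem : ∀ j : ℕ, ((n + j : ℕ) : ℝ) ∈ Ici (n : ℝ) := fun j => by
    simp only [mem_Ici, Nat.cast_le, Nat.le_add_right]
  have hIcc : ∀ j : ℕ, Icc ((n + j : ℕ) : ℝ) ((n + j : ℕ) + 1) ⊆ Ici (n : ℝ) :=
    fun j t ht => (hmem j).trans ht.1
  simpa using le_mul_tsum_div_of_le_succ_add (div_nonneg (by linarith) hα.le)
    (fun j => Real.rpow_nonneg (hpos _ (hmem j)).le s) hsum fun j => by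
      have hsucc : ((n + (j + 1) : ℕ) : ℝ) = ((n + j : ℕ) : ℝ) + 1 := by push_cast; ring
      rw [hsucc]
      exact rpow_le_rpow_add_one_add_of_le_decayCharacteristic
        (by positivity) hα hs (hpos _ (hmem j))
        (hpos _ (hIcc j ⟨by linarith, le_rfl⟩)).le (hcont.mono (hIcc j)) (hanti.mono (hIcc j))
        fun t ht => hchar t (hIcc j (Ico_subset_Icc_self ht))

end decayCharacteristic

theorem stmt_0_general (ψ : ℝ → ℝ) (s s' : ℝ) (hs : 1 < s) (hss' : 1 / s + 1 / s' = 1)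
    (hψpos : ∀ t ∈ Ici (1 : ℝ), 0 < ψ t)
    (hψcont : ContinuousOn ψ (Ici (1 : ℝ)))
    (hψdec : AntitoneOn ψ (Ici (1 : ℝ)))
    (hsum : Summable (fun k : ℕ => ψ k ^ s * (k : ℝ) ^ (s - 2)))
    (n : ℕ) (hn : 1 ≤ n) (α : ℝ) (hα : 0 < α)
    (g : ℝ → ℝ) (hg : ∀ t, g t = ψ t * t ^ (1 / s'))
    (hαg : ∀ t : ℝ, (n : ℝ) ≤ t →
      α ≤ g t / (t * |derivWithin g (Ici t) t|)) :
    ψ n ^ s * (n : ℝ) ^ (s - 1) ≤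
      (s / α) * ∑' k : ℕ, ψ (n + k) ^ s * ((n + k : ℕ) : ℝ) ^ (s - 2) := by
  have hpos : Ici (1 : ℝ) ⊆ Ioi 0 := fun _ ht => mem_Ioi.2 (zero_lt_one.trans_le ht)
  have hn1 : Ici (n : ℝ) ⊆ Ici 1 := Ici_subset_Ici.2 (by exact_mod_cast hn)
  have hgpow : ∀ t ∈ Ici (1 : ℝ), g t ^ s = ψ t ^ s * t ^ (s - 1) := fun t ht => by
    rw [hg]
    exact mul_rpow_conjExponent (hψpos t ht).le (hpos ht).le (by linarith) hss'
  have hterm : ∀ j : ℕ, g ((n + j : ℕ) : ℝ) ^ s / ((n + j : ℕ) : ℝ) =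
      ψ (n + j) ^ s * ((n + j : ℕ) : ℝ) ^ (s - 2) := fun j => by
    rw [hgpow _ (hn1 (by simp)), mul_div_assoc, ← Real.rpow_sub_one (by positivity), Nat.cast_add]
    ring_nf
  have hanti : AntitoneOn (fun t => g t / t) (Ici 1) := by
    refine (antitoneOn_mul_rpow_of_nonpos hpos hψdec (fun t ht => (hψpos t ht).le)
      (by linarith [one_div_pos.2 (by linarith : 0 < s)] : 1 / s' - 1 ≤ 0)).congr fun t ht => ?_
    rw [hg, mul_div_assoc, ← Real.rpow_sub_one (hpos ht).ne']
  have hcont : ContinuousOn g (Ici 1) := by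
    rw [show g = fun t => ψ t * t ^ (1 / s') from funext hg]
    exact hψcont.mul (continuousOn_id.rpow_const fun t ht => Or.inl (hpos ht).ne')
  have hgpos : ∀ t ∈ Ici (1 : ℝ), 0 < g t := fun t ht => by
    rw [hg]
    exact mul_pos (hψpos t ht) (Real.rpow_pos_of_pos (hpos ht) _)
  have key := rpow_le_mul_tsum_of_le_decayCharacteristic hn hα hs.le
    (fun t ht => hgpos t (hn1 ht)) (hcont.mono hn1) (hanti.mono hn1) hαg
    (((summable_nat_add_iff n).2 hsum).congr fun j => by
      rw [hterm, Nat.add_comm j n]; push_cast; rfl)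
  rwa [hgpow _ (hn1 self_mem_Ici), tsum_congr hterm] at key

/-- Lemma 1 (upper part): for `ψ` positive, continuous, convex, decreasing, tending to 0,
with `∑ ψ(k)^s k^(s-2) < ∞`, if `g(t) = ψ(t) t^(1/s')` has characteristic
`α(g;t) = g(t)/(t |g'(t+0)|) ≥ α` for `t ≥ n`, then
`ψ(n)^s n^(s-1) ≤ (s/α) ∑_{k=n}^∞ ψ(k)^s k^(s-2)`. -/
theorem stmt_0 (ψ : ℝ → ℝ) (s s' : ℝ) (hs : 1 < s) (hss' : 1 / s + 1 / s' = 1)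
    (hψpos : ∀ t ∈ Ici (1 : ℝ), 0 < ψ t)
    (hψcont : ContinuousOn ψ (Ici (1 : ℝ)))
    (hψconv : ConvexOn ℝ (Ici (1 : ℝ)) ψ)
    (hψdec : AntitoneOn ψ (Ici (1 : ℝ)))
    (hψ0 : Tendsto ψ atTop (nhds 0))
    (hsum : Summable (fun k : ℕ => ψ k ^ s * (k : ℝ) ^ (s - 2)))
    (n : ℕ) (hn : 1 ≤ n) (α : ℝ) (hα : 0 < α)
    (g : ℝ → ℝ) (hg : ∀ t, g t = ψ t * t ^ (1 / s'))
    (hαg : ∀ t : ℝ, (n : ℝ) ≤ t →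
      α ≤ g t / (t * |derivWithin g (Ici t) t|)) :
    ψ n ^ s * (n : ℝ) ^ (s - 1) ≤
      (s / α) * ∑' k : ℕ, ψ (n + k) ^ s * ((n + k : ℕ) : ℝ) ^ (s - 2) :=
  stmt_0_general ψ s s' hs hss' hψpos hψcont hψdec hsum n hn α hα g hg hαg
end

section
/- Let ψ : [1,∞) → (0,∞) be a positive, continuous, convex, decreasing function with Σ_{k=1}^∞ ψ(k) < ∞. Let g(t) = ψ(t)·t and suppose there is α > 0 such that g(t)/(t·|g'(t+0)|) ≥ α for all t ≥ n. Then ψ(n)·n ≤ (1/α) · Σ_{k=n}^∞ ψ(k). -/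
open Set Filter Topology

/-!
On a step `[x, x + 1]` with `x ≥ n`, the ratio bound gives `|g'(t+0)| ≤ ψ(t)/α ≤ ψ(x)/α`, so the
mean value inequality yields `g(x) - g(x + 1) ≤ ψ(x)/α`. Telescoping from `n`,
`g(n) - g(n + N) ≤ (1/α) ∑_{k<N} ψ(n + k)`, and `g(n + N) = (n + N) ψ(n + N) → 0` because the terms
of a convergent series with decreasing terms are `o(1/k)`.
-/

/-- Olivier's theorem. -/
theorem Antitone.tendsto_natCast_mul_atTop_zero {f : ℕ → ℝ} (hf : Antitone f)
    (hs : Summable f) : Tendsto (fun k : ℕ => (k : ℝ) * f k) atTop (𝓝 0) := by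
  have hnonneg : ∀ k, 0 ≤ f k := hf.le_of_tendsto hs.tendsto_atTop_zero
  have hpartial := hs.hasSum.tendsto_sum_nat
  have hblock : Tendsto (fun k => ∑ i ∈ Finset.range k, f i - ∑ i ∈ Finset.range (k / 2), f i)
      atTop (𝓝 0) := by
    simpa using hpartial.sub (hpartial.comp (Nat.tendsto_div_const_atTop two_ne_zero))
  -- `f k` is below each of the `k - k / 2` terms of the block `[k / 2, k)`.
  have hbound : ∀ k : ℕ, (k : ℝ) * f k ≤
      2 * (∑ i ∈ Finset.range k, f i - ∑ i ∈ Finset.range (k / 2), f i) := by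
    intro k
    rw [← Finset.sum_Ico_eq_sub _ (Nat.div_le_self k 2)]
    have hcard : (k : ℝ) ≤ 2 * ((k - k / 2 : ℕ) : ℝ) := by
      exact_mod_cast (by omega : k ≤ 2 * (k - k / 2))
    calc (k : ℝ) * f k ≤ 2 * ((k - k / 2 : ℕ) : ℝ) * f k :=
          mul_le_mul_of_nonneg_right hcard (hnonneg k)
      _ = 2 * ∑ _i ∈ Finset.Ico (k / 2) k, f k := by simp [mul_assoc]
      _ ≤ 2 * ∑ i ∈ Finset.Ico (k / 2) k, f i := by
          gcongr with i hi
          exact hf (Finset.mem_Ico.1 hi).2.le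
  exact tendsto_of_tendsto_of_tendsto_of_le_of_le tendsto_const_nhds
    (by simpa using hblock.const_mul 2) (fun k => mul_nonneg k.cast_nonneg (hnonneg k)) hbound

theorem ne_zero_and_abs_le_div_of_le_mul_div {α t c d : ℝ} (hα : 0 < α) (ht : 0 < t)
    (h : α ≤ c * t / (t * |d|)) : d ≠ 0 ∧ |d| ≤ c / α := by
  have hd : d ≠ 0 := by
    rintro rfl
    simp only [abs_zero, mul_zero, div_zero] at h
    exact hα.not_ge h
  refine ⟨hd, ?_⟩
  rw [mul_comm c, mul_div_mul_left _ _ ht.ne', le_div_iff₀ (abs_pos.2 hd)] at h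
  rw [le_div_iff₀ hα]
  linarith

theorem sub_image_add_one_le_div {ψ g : ℝ → ℝ} {α a : ℝ} (hα : 0 < α) (ha : 0 < a)
    (hψ : ContinuousOn ψ (Ici a)) (hanti : AntitoneOn ψ (Ici a)) (hg : ∀ t, g t = ψ t * t)
    (hαg : ∀ t, a ≤ t → α ≤ g t / (t * |derivWithin g (Ici t) t|)) {x : ℝ} (hx : a ≤ x) :
    g x - g (x + 1) ≤ ψ x / α := by
  have hderiv : ∀ t, a ≤ t → HasDerivWithinAt g (derivWithin g (Ici t) t) (Ici t) t ∧
      |derivWithin g (Ici t) t| ≤ ψ t / α := by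
    intro t ht
    -- `derivWithin` is `0` where `g` has no right derivative, and the ratio bound excludes `0`.
    obtain ⟨hne, hle⟩ :=
      ne_zero_and_abs_le_div_of_le_mul_div hα (ha.trans_le ht) (hg t ▸ hαg t ht)
    exact ⟨(differentiableWithinAt_of_derivWithin_ne_zero hne).hasDerivWithinAt, hle⟩
  have hcont : ContinuousOn g (Icc x (x + 1)) := by
    rw [funext hg]
    exact (hψ.mul continuousOn_id).mono fun y hy => hx.trans hy.1
  have hmvt := norm_image_sub_le_of_norm_deriv_right_le_segment hcont
    (fun y hy => (hderiv y (hx.trans hy.1)).1)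
    (fun y hy => (hderiv y (hx.trans hy.1)).2.trans
      (div_le_div_of_nonneg_right (hanti hx (hx.trans hy.1) hy.1) hα.le))
    (x + 1) ⟨by linarith, le_rfl⟩
  rw [Real.norm_eq_abs, add_sub_cancel_left, mul_one] at hmvt
  linarith [neg_abs_le (g (x + 1) - g x)]

theorem sub_le_tsum_of_sub_succ_le {u b : ℕ → ℝ} {L : ℝ} (hu : Tendsto u atTop (𝓝 L))
    (hb : Summable b) (h : ∀ j, u j - u (j + 1) ≤ b j) : u 0 - L ≤ ∑' j, b j := by
  refine le_of_tendsto_of_tendsto' (tendsto_const_nhds.sub hu) hb.hasSum.tendsto_sum_nat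
    fun N => ?_
  rw [← Finset.sum_range_sub']
  exact Finset.sum_le_sum fun j _ => h j

theorem stmt_1_general (ψ : ℝ → ℝ)
    (hψcont : ContinuousOn ψ (Ici (1 : ℝ)))
    (hψdec : AntitoneOn ψ (Ici (1 : ℝ)))
    (hsum : Summable (fun k : ℕ => ψ k))
    (n : ℕ) (hn : 1 ≤ n) (α : ℝ) (hα : 0 < α)
    (g : ℝ → ℝ) (hg : ∀ t, g t = ψ t * t)
    (hαg : ∀ t : ℝ, (n : ℝ) ≤ t →
      α ≤ g t / (t * |derivWithin g (Ici t) t|)) :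
    ψ n * (n : ℝ) ≤ (1 / α) * ∑' k : ℕ, ψ (n + k) := by
  have hn1 : (1 : ℝ) ≤ n := by exact_mod_cast hn
  have hIci : Ici (n : ℝ) ⊆ Ici 1 := Ici_subset_Ici.2 hn1
  have hmem : ∀ k : ℕ, (n : ℝ) + k ∈ Ici (n : ℝ) := fun k => by simp
  have hanti : Antitone fun k : ℕ => ψ (n + k) := fun i j hij =>
    hψdec (hIci (hmem i)) (hIci (hmem j)) (by simpa using hij)
  have hsum' : Summable fun k : ℕ => ψ (n + k) := by
    simpa [add_comm] using (summable_nat_add_iff n).2 hsum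
  have hlim : Tendsto (fun k : ℕ => g (n + k)) atTop (𝓝 0) := by
    have hsplit : (fun k : ℕ => g (n + k)) = fun k : ℕ => n * ψ (n + k) + k * ψ (n + k) := by
      funext k; rw [hg]; ring
    rw [hsplit]
    simpa using (hsum'.tendsto_atTop_zero.const_mul (n : ℝ)).add
      (hanti.tendsto_natCast_mul_atTop_zero hsum')
  have hstep : ∀ j : ℕ, g (n + j) - g (n + (j + 1 : ℕ)) ≤ ψ (n + j) / α := fun j => by
    simpa [add_assoc] using sub_image_add_one_le_div hα (by positivity)
      (hψcont.mono hIci) (hψdec.mono hIci) hg hαg (hmem j)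
  have htel := sub_le_tsum_of_sub_succ_le hlim (hsum'.div_const α) hstep
  rw [tsum_div_const] at htel
  simpa [hg, div_eq_inv_mul] using htel

/-- Lemma 2 (upper part): for `ψ` positive, continuous, convex, decreasing with
`∑ ψ(k) < ∞`, if `g(t) = ψ(t) t` satisfies `g(t)/(t |g'(t+0)|) ≥ α` for `t ≥ n`, then
`ψ(n) n ≤ (1/α) ∑_{k=n}^∞ ψ(k)`. -/
theorem stmt_1 (ψ : ℝ → ℝ)
    (hψpos : ∀ t ∈ Ici (1 : ℝ), 0 < ψ t)
    (hψcont : ContinuousOn ψ (Ici (1 : ℝ)))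
    (hψconv : ConvexOn ℝ (Ici (1 : ℝ)) ψ)
    (hψdec : AntitoneOn ψ (Ici (1 : ℝ)))
    (hsum : Summable (fun k : ℕ => ψ k))
    (n : ℕ) (hn : 1 ≤ n) (α : ℝ) (hα : 0 < α)
    (g : ℝ → ℝ) (hg : ∀ t, g t = ψ t * t)
    (hαg : ∀ t : ℝ, (n : ℝ) ≤ t →
      α ≤ g t / (t * |derivWithin g (Ici t) t|)) :
    ψ n * (n : ℝ) ≤ (1 / α) * ∑' k : ℕ, ψ (n + k) :=
  stmt_1_general ψ hψcont hψdec hsum n hn α hα g hg hαg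
end

section
/- Let ψ : [1,∞) → (0,∞) be positive, continuous, convex and decreasing with Σ_{k=1}^∞ ψ(k)^s k^{s-2} < ∞ for some 1 < s < ∞, 1/s+1/s' = 1. Suppose g(t) = ψ(t) t^{1/s'} is decreasing and there is α > 0 with g(t)/(t|g'(t+0)|) ≥ α for all t ≥ n. Let Φ(x) = ∫_x^∞ ψ(t)^s t^{s-2} dt, let l ∈ ℕ, and let A = ⌊Φ^{-1}(Φ(n)/(2l))⌋ + 2n. Then Σ_{k=2n}^{A} ψ(k)^s k^{s-2} > (1 − 1/(2l) − s/α) · Σ_{k=n}^∞ ψ(k)^s k^{s-2}. -/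
/-!
Put `f t = ψ t ^ s * t ^ (s - 2)`; since `s / s' = s - 1`, `f t = g t ^ s / t`, so `f` is positive
and decreasing. Split `∑_{k ≥ n} f k` into the head `∑_{n ≤ k < 2n}`, the middle `∑_{2n ≤ k ≤ A}`
and the tail `∑_{k > A}`. By the integral test the tail is at most `Φ A < Φ B = Φ n / (2l)`, and
`Φ n` is at most the whole sum. The head is at most `n f n = g n ^ s`, and `g n ^ s ≤ (s / α) Φ n`:
the function `(α / s) g(x) ^ s + ∫_n^x g ^ s / t` has right derivative
`g ^ (s - 1) (α g'₊ + g / x) ≥ 0` by the hypothesis on `g`, and `g(x) ^ s → 0` because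
`∑ g(k) ^ s / k` converges.
-/

open Set Filter MeasureTheory Topology

theorem rpow_mul_rpow_sub_two_eq_div {x t s s' : ℝ} (hx : 0 ≤ x) (ht : 0 < t) (hs : s ≠ 0)
    (hss' : 1 / s + 1 / s' = 1) : x ^ s * t ^ (s - 2) = (x * t ^ (1 / s')) ^ s / t := by
  have hexp : 1 / s' * s = s - 1 := by
    rw [show 1 / s' = 1 - 1 / s by linarith]
    field_simp
  rw [Real.mul_rpow hx (by positivity), ← Real.rpow_mul ht.le, hexp, mul_div_assoc,
    ← Real.rpow_sub_one ht.ne', sub_sub, one_add_one_eq_two]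

theorem antitoneOn_rpow_div_self {g : ℝ → ℝ} {a s : ℝ} (ha : 0 < a) (hs : 0 ≤ s)
    (hg : AntitoneOn g (Ici a)) (hg0 : ∀ t ∈ Ici a, 0 ≤ g t) :
    AntitoneOn (fun t => g t ^ s / t) (Ici a) := fun x hx y hy hxy =>
  div_le_div₀ (Real.rpow_nonneg (hg0 x hx) _) (Real.rpow_le_rpow (hg0 y hy) (hg hx hy hxy) hs)
    (ha.trans_le hx) hxy

theorem AntitoneOn.tendsto_atTop_zero_of_summable_div {G : ℝ → ℝ} (hG : AntitoneOn G (Ici 1))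
    (hG0 : ∀ t ∈ Ici 1, 0 ≤ G t) (hsum : Summable fun k : ℕ => G k / k) :
    Tendsto G atTop (𝓝 0) := by
  rw [Metric.tendsto_atTop]
  intro ε hε
  obtain ⟨k, hk1, hk⟩ : ∃ k : ℕ, 1 ≤ k ∧ G k < ε := by
    by_contra! hge
    refine Real.not_summable_one_div_natCast
      ((hsum.mul_left ε⁻¹).of_nonneg_of_le (fun k => by positivity) fun k => ?_)
    rcases Nat.eq_zero_or_pos k with rfl | hk
    · simp
    rw [← mul_div_assoc, div_le_div_iff_of_pos_right (by positivity), le_inv_mul_iff₀ hε, mul_one]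
    exact hge k hk
  have hk1' : (1 : ℝ) ≤ k := by exact_mod_cast hk1
  refine ⟨k, fun t ht => ?_⟩
  rw [Real.dist_0_eq_abs, abs_of_nonneg (hG0 t (hk1'.trans ht))]
  exact (hG hk1' (hk1'.trans ht) ht).trans_lt hk

theorem le_of_hasDerivWithinAt_Ici_nonneg {F F' : ℝ → ℝ} {a b : ℝ} (hab : a ≤ b)
    (hF : ContinuousOn F (Icc a b)) (hF' : ∀ x ∈ Ico a b, HasDerivWithinAt F (F' x) (Ici x) x)
    (hF'0 : ∀ x ∈ Ico a b, 0 ≤ F' x) : F a ≤ F b :=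
  image_le_of_deriv_right_le_deriv_boundary continuousOn_const
    (fun x _ => hasDerivWithinAt_const x _ (F a)) le_rfl hF hF' hF'0 (right_mem_Icc.2 hab)

theorem rpow_le_rpow_add_integral_of_neg_deriv_le {g g' : ℝ → ℝ} {a b s α : ℝ} (ha : 0 < a)
    (hab : a ≤ b) (hs : s ≠ 0) (hcont : ContinuousOn g (Icc a b))
    (hpos : ∀ x ∈ Icc a b, 0 < g x) (hderiv : ∀ x ∈ Ico a b, HasDerivWithinAt g (g' x) (Ici x) x)
    (hbound : ∀ x ∈ Ico a b, α * x * -g' x ≤ g x) :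
    α / s * g a ^ s ≤ α / s * g b ^ s + ∫ t in a..b, g t ^ s / t := by
  have hxpos : ∀ x ∈ Icc a b, 0 < x := fun x hx => ha.trans_le hx.1
  have hcont_pow : ContinuousOn (fun t => g t ^ s) (Icc a b) :=
    hcont.rpow_const fun x hx => Or.inl (hpos x hx).ne'
  have hcont_f : ContinuousOn (fun t => g t ^ s / t) (Icc a b) :=
    hcont_pow.div continuousOn_id fun x hx => (hxpos x hx).ne'
  have hmono := le_of_hasDerivWithinAt_Ici_nonneg
    (F := fun x => α / s * g x ^ s + ∫ t in a..x, g t ^ s / t)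
    (F' := fun x => α / s * (g' x * s * g x ^ (s - 1)) + g x ^ s / x) hab ?_ ?_ ?_
  · simpa using hmono
  · refine (continuousOn_const.mul hcont_pow).add ?_
    rw [← uIcc_of_le hab] at hcont_f ⊢
    exact intervalIntegral.continuousOn_primitive_interval
      (hcont_f.integrableOn_compact isCompact_uIcc)
  · intro x hx
    have hxI : x ∈ Icc a b := Ico_subset_Icc_self hx
    refine (((hderiv x hx).rpow_const (Or.inl (hpos x hxI).ne')).const_mul _).add ?_
    have hmem : Icc a b ∈ 𝓝[>] x := Icc_mem_nhdsGT_of_mem hx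
    exact intervalIntegral.integral_hasDerivWithinAt_right
      ((hcont_f.mono (Icc_subset_Icc_right hx.2.le)).intervalIntegrable_of_Icc hx.1)
      ((hcont_f.stronglyMeasurableAtFilter_nhdsWithin measurableSet_Icc x).filter_mono
        (nhdsWithin_le_of_mem hmem))
      ((hcont_f x hxI).mono_of_mem_nhdsWithin hmem)
  · intro x hx
    have hxI : x ∈ Icc a b := Ico_subset_Icc_self hx
    have hgx := hpos x hxI
    have hx0 := hxpos x hxI
    have hfactor : 0 ≤ α * g' x + g x / x := by
      rw [← mul_div_cancel_left₀ (α * g' x) hx0.ne', ← add_div]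
      exact div_nonneg (by linarith [hbound x hx]) hx0.le
    have hsplit : g x ^ s = g x ^ (s - 1) * g x := by
      rw [Real.rpow_sub_one hgx.ne', div_mul_cancel₀ _ hgx.ne']
    calc (0 : ℝ) ≤ g x ^ (s - 1) * (α * g' x + g x / x) := by positivity
      _ = _ := by rw [hsplit]; field_simp

theorem rpow_le_div_mul_integral_Ioi {g : ℝ → ℝ} {a s α : ℝ} (ha : 0 < a) (hs : 0 < s)
    (hα : 0 < α) (hcont : ContinuousOn g (Ici a)) (hpos : ∀ x ∈ Ici a, 0 < g x)
    (hαg : ∀ x ∈ Ici a, α ≤ g x / (x * |derivWithin g (Ici x) x|))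
    (hlim : Tendsto (fun t => g t ^ s) atTop (𝓝 0))
    (hint : IntegrableOn (fun t => g t ^ s / t) (Ioi a)) :
    g a ^ s ≤ s / α * ∫ t in Ioi a, g t ^ s / t := by
  have hderiv : ∀ x ∈ Ici a, HasDerivWithinAt g (derivWithin g (Ici x) x) (Ici x) x := by
    intro x hx
    refine DifferentiableWithinAt.hasDerivWithinAt (by_contra fun hnd => ?_)
    have h := hαg x hx
    rw [derivWithin_zero_of_not_differentiableWithinAt hnd, abs_zero, mul_zero, div_zero] at h
    exact hα.not_ge h
  have hbound : ∀ x ∈ Ici a, α * x * -derivWithin g (Ici x) x ≤ g x := by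
    intro x hx
    have hx0 : 0 < x := ha.trans_le hx
    calc α * x * -derivWithin g (Ici x) x ≤ α * (x * |derivWithin g (Ici x) x|) := by
          rw [mul_assoc]; gcongr; exact neg_le_abs _
      _ ≤ g x := mul_le_of_le_div₀ (hpos x hx).le (by positivity) (hαg x hx)
  have hfinite : ∀ b ≥ a, α / s * g a ^ s ≤ α / s * g b ^ s + ∫ t in Ioi a, g t ^ s / t := by
    intro b hb
    have hnonneg : 0 ≤ ∫ t in Ioi b, g t ^ s / t :=
      setIntegral_nonneg measurableSet_Ioi fun t ht =>
        div_nonneg (Real.rpow_nonneg (hpos t (hb.trans ht.le)).le _) (ha.trans (hb.trans_lt ht)).le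
    have hsplit := intervalIntegral.integral_Ioi_sub_Ioi hint hb
    have := rpow_le_rpow_add_integral_of_neg_deriv_le ha hb hs.ne'
      (hcont.mono Icc_subset_Ici_self) (fun x hx => hpos x hx.1) (fun x hx => hderiv x hx.1)
      (fun x hx => hbound x hx.1)
    linarith
  have hlimit := ge_of_tendsto ((hlim.const_mul (α / s)).add_const (∫ t in Ioi a, g t ^ s / t))
    (eventually_atTop.2 ⟨a, hfinite⟩)
  rw [mul_zero, zero_add] at hlimit
  calc g a ^ s = s / α * (α / s * g a ^ s) := by field_simp
    _ ≤ s / α * ∫ t in Ioi a, g t ^ s / t := by gcongr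

theorem AntitoneOn.tsum_comp_add_lt_integral_Ioi {f : ℝ → ℝ} {a B : ℝ} {A : ℕ}
    (hf : AntitoneOn f (Ici a)) (hpos : ∀ t ∈ Ici a, 0 < f t) (hint : IntegrableOn f (Ioi a))
    (haB : a ≤ B) (hBA : B < A) :
    ∑' k : ℕ, f (k + A + 1 : ℕ) < ∫ t in Ioi B, f t := by
  have haA : a ≤ A := haB.trans hBA.le
  have hintB : IntegrableOn f (Ioi B) := hint.mono_set (Ioi_subset_Ioi haB)
  have hsum_le := (hf.mono (Ici_subset_Ici.2 haA)).tsum_comp_add_le_integral A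
    (hint.mono_set (Ioi_subset_Ioi haA)) fun t ht => (hpos t (haA.trans ht.le)).le
  have hsplit := intervalIntegral.integral_Ioi_sub_Ioi hintB hBA.le
  have hmid := intervalIntegral.intervalIntegral_pos_of_pos_on
    ((intervalIntegrable_iff_integrableOn_Ioc_of_le hBA.le).2 (hintB.mono_set Ioc_subset_Ioi_self))
    (fun t ht => hpos t (haB.trans ht.1.le)) hBA
  linarith

theorem sum_Ico_two_mul_le_div_mul_integral_Ioi {f g : ℝ → ℝ} {n : ℕ} {s α : ℝ} (hn : 0 < n)
    (hs : 0 < s) (hα : 0 < α) (hfg : ∀ t ∈ Ici (n : ℝ), f t = g t ^ s / t)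
    (hf : AntitoneOn f (Ici n)) (hint : IntegrableOn f (Ioi n)) (hcont : ContinuousOn g (Ici n))
    (hpos : ∀ t ∈ Ici (n : ℝ), 0 < g t)
    (hαg : ∀ t ∈ Ici (n : ℝ), α ≤ g t / (t * |derivWithin g (Ici t) t|))
    (hlim : Tendsto (fun t => g t ^ s) atTop (𝓝 0)) :
    ∑ k ∈ Finset.Ico n (2 * n), f k ≤ s / α * ∫ t in Ioi (n : ℝ), f t := by
  have hn0 : (0 : ℝ) < n := by exact_mod_cast hn
  have hf_eq : EqOn f (fun t => g t ^ s / t) (Ioi n) := fun t ht => hfg t (mem_Ici.2 ht.le)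
  calc ∑ k ∈ Finset.Ico n (2 * n), f k ≤ (Finset.Ico n (2 * n)).card • f n :=
        Finset.sum_le_card_nsmul _ _ _ fun k hk => by
          have hk : (n : ℝ) ≤ k := by exact_mod_cast (Finset.mem_Ico.1 hk).1
          exact hf self_mem_Ici hk hk
    _ = g n ^ s := by
        rw [Nat.card_Ico, two_mul, Nat.add_sub_cancel, nsmul_eq_mul, hfg n self_mem_Ici]
        field_simp
    _ ≤ s / α * ∫ t in Ioi (n : ℝ), g t ^ s / t :=
        rpow_le_div_mul_integral_Ioi hn0 hs hα hcont hpos hαg hlim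
          (hint.congr_fun hf_eq measurableSet_Ioi)
    _ = s / α * ∫ t in Ioi (n : ℝ), f t := by
        rw [setIntegral_congr_fun measurableSet_Ioi hf_eq]

theorem tsum_add_eq_sum_Ico_add_tsum {G : Type*} [AddCommGroup G] [TopologicalSpace G]
    [IsTopologicalAddGroup G] [T2Space G] {f : ℕ → G} (hf : Summable f) {m N : ℕ} (hmN : m ≤ N) :
    ∑' k, f (k + m) = ∑ k ∈ Finset.Ico m N, f k + ∑' k, f (k + N) := by
  rw [← ((summable_nat_add_iff m).2 hf).sum_add_tsum_nat_add (N - m), Finset.sum_Ico_eq_sum_range]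
  congr 1
  · exact Finset.sum_congr rfl fun k _ => by rw [add_comm]
  · exact tsum_congr fun k => by congr 1; omega

theorem lt_sum_Icc_of_sum_Ico_le_of_tsum_lt {f : ℕ → ℝ} (hf : Summable f) {n A : ℕ}
    (hnA : 2 * n ≤ A + 1) {c d P : ℝ} (hc : 0 ≤ c) (hd : 0 ≤ d) (hP : P ≤ ∑' k, f (k + n))
    (hhead : ∑ k ∈ Finset.Ico n (2 * n), f k ≤ c * P) (htail : ∑' k, f (k + A + 1) < d * P) :
    (1 - d - c) * ∑' k, f (k + n) < ∑ k ∈ Finset.Icc (2 * n) A, f k := by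
  have hsplit := tsum_add_eq_sum_Ico_add_tsum hf (m := n) (N := A + 1) (by omega)
  rw [← Finset.sum_Ico_consecutive _ (by omega : n ≤ 2 * n) hnA,
    Finset.Ico_add_one_right_eq_Icc] at hsplit
  have hcP : c * P ≤ c * ∑' k, f (k + n) := by gcongr
  have hdP : d * P ≤ d * ∑' k, f (k + n) := by gcongr
  have htail' : ∑' k, f (k + (A + 1)) < d * P := htail
  linarith

theorem sum_Icc_gt_of_eq_rpow_div {f g : ℝ → ℝ} {s α B : ℝ} {n l A : ℕ} (hs : 0 < s)
    (hα : 0 < α) (hfg : ∀ t ∈ Ici 1, f t = g t ^ s / t) (hsum : Summable fun k : ℕ => f k)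
    (hgpos : ∀ t ∈ Ici 1, 0 < g t) (hgcont : ContinuousOn g (Ici 1))
    (hganti : AntitoneOn g (Ici 1)) (hn : 0 < n)
    (hαg : ∀ t ∈ Ici (n : ℝ), α ≤ g t / (t * |derivWithin g (Ici t) t|))
    (hB1 : 1 ≤ B) (hB : ∫ t in Ioi B, f t = (∫ t in Ioi (n : ℝ), f t) / (2 * l))
    (hBA : B < A) (hnA : 2 * n ≤ A + 1) :
    (1 - 1 / (2 * l) - s / α) * ∑' k : ℕ, f (k + n : ℕ) < ∑ k ∈ Finset.Icc (2 * n) A, f k := by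
  have hn1 : (1 : ℝ) ≤ n := by exact_mod_cast hn
  have hfpos : ∀ t ∈ Ici 1, 0 < f t := fun t ht => by
    rw [hfg t ht]; exact div_pos (Real.rpow_pos_of_pos (hgpos t ht) s) (one_pos.trans_le ht)
  have hfanti : AntitoneOn f (Ici 1) :=
    (antitoneOn_rpow_div_self one_pos hs.le hganti fun t ht => (hgpos t ht).le).congr
      fun t ht => (hfg t ht).symm
  have hfint : IntegrableOn f (Ioi 1) := by
    have h := AntitoneOn.integrableOn_Ioi_of_summable_comp_add (f := f) (N := 1)
      (by rw [Nat.cast_one]; exact hfanti) ((summable_nat_add_iff 1).2 hsum)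
      fun t ht => (hfpos t (Ioi_subset_Ici_self (by exact_mod_cast ht))).le
    rwa [Nat.cast_one] at h
  have hlim : Tendsto (fun t => g t ^ s) atTop (𝓝 0) := by
    refine AntitoneOn.tendsto_atTop_zero_of_summable_div
      (fun x hx y hy hxy => Real.rpow_le_rpow (hgpos y hy).le (hganti hx hy hxy) hs.le)
      (fun t ht => (Real.rpow_pos_of_pos (hgpos t ht) s).le) ?_
    refine (summable_nat_add_iff 1).1 (((summable_nat_add_iff 1).2 hsum).congr fun k => ?_)
    exact hfg _ (by simp)
  have hhead := sum_Ico_two_mul_le_div_mul_integral_Ioi hn hs hα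
    (fun t ht => hfg t (hn1.trans ht)) (hfanti.mono (Ici_subset_Ici.2 hn1))
    (hfint.mono_set (Ioi_subset_Ioi hn1)) (hgcont.mono (Ici_subset_Ici.2 hn1))
    (fun t ht => hgpos t (hn1.trans ht)) hαg hlim
  have htail := hfanti.tsum_comp_add_lt_integral_Ioi hfpos hfint hB1 hBA
  have hΦT := (hfanti.mono (Ici_subset_Ici.2 hn1)).integral_le_tsum_comp_add n hsum
    fun t ht => (hfpos t (hn1.trans ht.le)).le
  refine lt_sum_Icc_of_sum_Ico_le_of_tsum_lt (f := fun k : ℕ => f k) hsum hnA (by positivity)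
    (by positivity) hΦT hhead ?_
  rw [hB, div_eq_inv_mul] at htail
  rwa [one_div]

theorem stmt_7_general (ψ : ℝ → ℝ) (s s' : ℝ) (hs : 1 < s) (hss' : 1 / s + 1 / s' = 1)
    (hψpos : ∀ t ∈ Ici (1 : ℝ), 0 < ψ t)
    (hψcont : ContinuousOn ψ (Ici (1 : ℝ)))
    (hsum : Summable (fun k : ℕ => ψ k ^ s * (k : ℝ) ^ (s - 2)))
    (g : ℝ → ℝ) (hg : ∀ t, g t = ψ t * t ^ (1 / s'))
    (hgdec : AntitoneOn g (Ici (1 : ℝ)))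
    (n : ℕ) (hn : 1 ≤ n) (α : ℝ) (hα : 0 < α)
    (hαg : ∀ t : ℝ, (n : ℝ) ≤ t →
      α ≤ g t / (t * |derivWithin g (Ici t) t|))
    (Φ : ℝ → ℝ) (hΦ : ∀ x, Φ x = ∫ t in Ioi x, ψ t ^ s * t ^ (s - 2))
    (l : ℕ)
    (B : ℝ) (hB1 : 1 ≤ B) (hB : Φ B = Φ n / (2 * l))
    (A : ℕ) (hA : A = ⌊B⌋₊ + 2 * n) :
    ∑ k ∈ Finset.Icc (2 * n) A, ψ k ^ s * (k : ℝ) ^ (s - 2) >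
      (1 - 1 / (2 * l) - s / α) *
        ∑' k : ℕ, ψ (n + k) ^ s * ((n + k : ℕ) : ℝ) ^ (s - 2) := by
  have hs0 : 0 < s := by linarith
  have hgpos : ∀ t ∈ Ici (1 : ℝ), 0 < g t := fun t ht => by
    rw [hg]; exact mul_pos (hψpos t ht) (Real.rpow_pos_of_pos (one_pos.trans_le ht) _)
  have hgcont : ContinuousOn g (Ici 1) :=
    (hψcont.mul fun t ht => (Real.continuousAt_rpow_const t _
      (Or.inl (one_pos.trans_le ht).ne')).continuousWithinAt).congr fun t _ => hg t
  have hfg : ∀ t ∈ Ici (1 : ℝ), ψ t ^ s * t ^ (s - 2) = g t ^ s / t := fun t ht => by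
    rw [hg]
    exact rpow_mul_rpow_sub_two_eq_div (hψpos t ht).le (one_pos.trans_le ht) hs0.ne' hss'
  have hBA : B < A := by
    have hfloor := Nat.lt_floor_add_one B
    have hn1 : (1 : ℝ) ≤ n := by exact_mod_cast hn
    rw [hA]; push_cast; linarith
  rw [hΦ, hΦ] at hB
  have key := sum_Icc_gt_of_eq_rpow_div hs0 hα hfg hsum hgpos hgcont hgdec hn hαg hB1
    hB hBA (by omega)
  convert key using 2
  exact tsum_congr fun k => by push_cast; ring_nf

/-- Key inequality (18): with `Φ(x) = ∫_x^∞ ψ(t)^s t^(s-2) dt` and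
`A = ⌊Φ⁻¹(Φ(n)/(2l))⌋ + 2n`, one has
`∑_{k=2n}^A ψ(k)^s k^(s-2) > (1 - 1/(2l) - s/α) ∑_{k=n}^∞ ψ(k)^s k^(s-2)`. -/
theorem stmt_7 (ψ : ℝ → ℝ) (s s' : ℝ) (hs : 1 < s) (hss' : 1 / s + 1 / s' = 1)
    (hψpos : ∀ t ∈ Ici (1 : ℝ), 0 < ψ t)
    (hψcont : ContinuousOn ψ (Ici (1 : ℝ)))
    (hψconv : ConvexOn ℝ (Ici (1 : ℝ)) ψ)
    (hψdec : AntitoneOn ψ (Ici (1 : ℝ)))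
    (hsum : Summable (fun k : ℕ => ψ k ^ s * (k : ℝ) ^ (s - 2)))
    (g : ℝ → ℝ) (hg : ∀ t, g t = ψ t * t ^ (1 / s'))
    (hgdec : AntitoneOn g (Ici (1 : ℝ)))
    (n : ℕ) (hn : 1 ≤ n) (α : ℝ) (hα : 0 < α)
    (hαg : ∀ t : ℝ, (n : ℝ) ≤ t →
      α ≤ g t / (t * |derivWithin g (Ici t) t|))
    (Φ : ℝ → ℝ) (hΦ : ∀ x, Φ x = ∫ t in Ioi x, ψ t ^ s * t ^ (s - 2))
    (l : ℕ) (hl : 1 ≤ l)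
    (B : ℝ) (hB1 : 1 ≤ B) (hB : Φ B = Φ n / (2 * l))
    (A : ℕ) (hA : A = ⌊B⌋₊ + 2 * n) :
    ∑ k ∈ Finset.Icc (2 * n) A, ψ k ^ s * (k : ℝ) ^ (s - 2) >
      (1 - 1 / (2 * l) - s / α) *
        ∑' k : ℕ, ψ (n + k) ^ s * ((n + k : ℕ) : ℝ) ^ (s - 2) :=
  stmt_7_general ψ s s' hs hss' hψpos hψcont hsum g hg hgdec n hn α hα hαg Φ hΦ l B hB1 hB A hA
end

section
/- For every m ∈ ℕ, the L¹ norm over one period of the Vallée-Poussin kernel V_m(t) = 1/2 + Σ_{k=1}^{m} cos(kt) + 2·Σ_{k=m+1}^{2m−1} (1 − k/(2m)) cos(kt) satisfies ∫_{−π}^{π} |V_m(t)| dt ≤ 3π. -/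
/-!
With `W n = n F_n` the unnormalised Fejér kernel, `2m V_m = W (2m) - W m`. Each `W n` is the squared
modulus `|∑_{j<n} e^{ijt}|²`, hence nonnegative, and its integral over a period is `2πn` since
all nonconstant cosines integrate to zero. So
`2m ∫|V_m| ≤ ∫ W (2m) + ∫ W m = 2π(2m) + 2πm = 6πm`.
-/

open Real Finset

/-- `n` times the Fejér kernel: `∑_{|k|<n} (n - |k|) e^{ikt} = |∑_{j<n} e^{ijt}|²`. -/
noncomputable def scaledFejerKernel (n : ℕ) (t : ℝ) : ℝ :=
  n + 2 * ∑ k ∈ Icc 1 n, ((n : ℝ) - k) * cos (k * t)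

noncomputable def valleePoussinKernel (m : ℕ) (t : ℝ) : ℝ :=
  1 / 2 + ∑ k ∈ Icc 1 m, cos (k * t) +
    2 * ∑ k ∈ Icc (m + 1) (2 * m - 1), (1 - (k : ℝ) / (2 * m)) * cos (k * t)

lemma scaledFejerKernel_succ (n : ℕ) (t : ℝ) :
    scaledFejerKernel (n + 1) t = scaledFejerKernel n t + 2 * ∑ k ∈ Icc 1 n, cos (k * t) + 1 := by
  have hcoeff : ∀ k ∈ Icc 1 n, (((n + 1 : ℕ) : ℝ) - k) * cos (k * t)
      = ((n : ℝ) - k) * cos (k * t) + cos (k * t) := by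
    intro k _
    push_cast
    ring
  simp only [scaledFejerKernel]
  rw [sum_Icc_succ_top (by omega), sum_congr rfl hcoeff, sum_add_distrib]
  push_cast
  ring

lemma sum_range_cos_nat_sub_mul (n : ℕ) (t : ℝ) :
    ∑ l ∈ range n, cos ((n - l : ℝ) * t) = ∑ k ∈ Icc 1 n, cos (k * t) := by
  rw [← Ico_add_one_right_eq_Icc, sum_Ico_eq_sum_range, ← sum_range_reflect, Nat.add_sub_cancel]
  refine sum_congr rfl fun l hl => ?_
  have hln : l < n := mem_range.mp hl
  rw [Nat.cast_add, Nat.cast_sub (by omega : l ≤ n - 1), Nat.cast_sub (by omega : 1 ≤ n)]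
  ring_nf

lemma sum_range_sum_range_cos_sub_mul (n : ℕ) (t : ℝ) :
    ∑ j ∈ range n, ∑ l ∈ range n, cos ((j - l : ℝ) * t) = scaledFejerKernel n t := by
  induction n with
  | zero => simp [scaledFejerKernel]
  | succ n ih =>
    have hsymm : ∑ j ∈ range n, cos ((j - n : ℝ) * t) = ∑ l ∈ range n, cos ((n - l : ℝ) * t) := by
      refine sum_congr rfl fun j _ => ?_
      rw [← cos_neg]
      ring_nf
    simp only [sum_range_succ, sum_add_distrib, ih, hsymm, sum_range_cos_nat_sub_mul,
      scaledFejerKernel_succ, sub_self, zero_mul, cos_zero]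
    ring

lemma scaledFejerKernel_eq_sq_add_sq (n : ℕ) (t : ℝ) :
    scaledFejerKernel n t
      = (∑ j ∈ range n, cos (j * t)) ^ 2 + (∑ j ∈ range n, sin (j * t)) ^ 2 := by
  simp only [← sum_range_sum_range_cos_sub_mul, sq, sum_mul_sum, ← sum_add_distrib, sub_mul,
    cos_sub]

lemma scaledFejerKernel_nonneg (n : ℕ) (t : ℝ) : 0 ≤ scaledFejerKernel n t := by
  rw [scaledFejerKernel_eq_sq_add_sq]
  positivity

@[fun_prop]
lemma continuous_scaledFejerKernel (n : ℕ) : Continuous (scaledFejerKernel n) := by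
  unfold scaledFejerKernel
  fun_prop

lemma integral_cos_nat_mul {k : ℕ} (hk : k ≠ 0) : ∫ t in (-π)..π, cos (k * t) = 0 := by
  rw [intervalIntegral.integral_comp_mul_left cos (Nat.cast_ne_zero.mpr hk), integral_cos,
    mul_neg, sin_neg, sin_nat_mul_pi]
  simp

lemma integral_scaledFejerKernel (n : ℕ) : ∫ t in (-π)..π, scaledFejerKernel n t = 2 * π * n := by
  have hcos : ∀ k ∈ Icc 1 n, ∫ t in (-π)..π, ((n : ℝ) - k) * cos (k * t) = 0 := fun k hk => by
    rw [intervalIntegral.integral_const_mul, integral_cos_nat_mul (by simp at hk; omega), mul_zero]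
  unfold scaledFejerKernel
  rw [intervalIntegral.integral_add intervalIntegrable_const
      ((by fun_prop : Continuous _).intervalIntegrable _ _),
    intervalIntegral.integral_const_mul, intervalIntegral.integral_finsetSum
      (fun k _ => (by fun_prop : Continuous _).intervalIntegrable _ _),
    sum_eq_zero hcos, intervalIntegral.integral_const, smul_eq_mul]
  ring

lemma two_mul_mul_valleePoussinKernel (m : ℕ) (t : ℝ) :
    2 * m * valleePoussinKernel m t = scaledFejerKernel (2 * m) t - scaledFejerKernel m t := by
  rcases Nat.eq_zero_or_pos m with rfl | hm
  · simp
  have hsplit : ∑ k ∈ Icc 1 (2 * m), (((2 * m : ℕ) : ℝ) - k) * cos (k * t)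
      = ∑ k ∈ Icc 1 m, (2 * m - k : ℝ) * cos (k * t)
        + ∑ k ∈ Icc (m + 1) (2 * m - 1), (2 * m - k : ℝ) * cos (k * t) := by
    rw [← Ico_add_one_right_eq_Icc, ← Ico_add_one_right_eq_Icc, ← Ico_add_one_right_eq_Icc,
      Nat.sub_add_cancel (by omega), ← sum_Ico_consecutive _ (by omega : 1 ≤ m + 1)
        (by omega : m + 1 ≤ 2 * m + 1), sum_Ico_succ_top (by omega : m + 1 ≤ 2 * m)]
    push_cast
    simp
  have hlow : ∑ k ∈ Icc 1 m, (2 * m - k : ℝ) * cos (k * t)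
      = ∑ k ∈ Icc 1 m, (m - k : ℝ) * cos (k * t) + m * ∑ k ∈ Icc 1 m, cos (k * t) := by
    rw [mul_sum, ← sum_add_distrib]
    exact sum_congr rfl fun k _ => by ring
  have hhigh : ∑ k ∈ Icc (m + 1) (2 * m - 1), (2 * m - k : ℝ) * cos (k * t)
      = 2 * m * ∑ k ∈ Icc (m + 1) (2 * m - 1), (1 - (k : ℝ) / (2 * m)) * cos (k * t) := by
    rw [mul_sum]
    exact sum_congr rfl fun k _ => by field_simp
  simp only [scaledFejerKernel, valleePoussinKernel, hsplit, hlow, hhigh]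
  push_cast
  ring

lemma abs_valleePoussinKernel_le (m : ℕ) (t : ℝ) :
    2 * m * |valleePoussinKernel m t| ≤ scaledFejerKernel (2 * m) t + scaledFejerKernel m t := by
  rw [← abs_of_nonneg (by positivity : (0 : ℝ) ≤ 2 * m), ← abs_mul,
    two_mul_mul_valleePoussinKernel]
  have hW2m := scaledFejerKernel_nonneg (2 * m) t
  have hWm := scaledFejerKernel_nonneg m t
  exact abs_sub_le_iff.mpr ⟨by linarith, by linarith⟩

@[fun_prop]
lemma continuous_valleePoussinKernel (m : ℕ) : Continuous (valleePoussinKernel m) := by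
  unfold valleePoussinKernel
  fun_prop

/-- The Vallée-Poussin kernel `V_m` has `L¹` norm over a period at most `3π`. -/
theorem stmt_8 (m : ℕ) (hm : 1 ≤ m)
    (V : ℝ → ℝ)
    (hV : ∀ t, V t = 1 / 2 + ∑ k ∈ Finset.Icc 1 m, Real.cos (k * t) +
      2 * ∑ k ∈ Finset.Icc (m + 1) (2 * m - 1),
        (1 - (k : ℝ) / (2 * m)) * Real.cos (k * t)) :
    ∫ t in (-π)..π, |V t| ≤ 3 * π := by
  obtain rfl : V = valleePoussinKernel m := funext hV
  have hbound : 2 * m * ∫ t in (-π)..π, |valleePoussinKernel m t|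
      ≤ ∫ t in (-π)..π, (scaledFejerKernel (2 * m) t + scaledFejerKernel m t) := by
    rw [← intervalIntegral.integral_const_mul]
    refine intervalIntegral.integral_mono_on (by linarith [pi_pos])
      ((by fun_prop : Continuous _).intervalIntegrable _ _)
      ((by fun_prop : Continuous _).intervalIntegrable _ _)
      fun t _ => abs_valleePoussinKernel_le m t
  rw [intervalIntegral.integral_add ((continuous_scaledFejerKernel _).intervalIntegrable _ _)
    ((continuous_scaledFejerKernel _).intervalIntegrable _ _), integral_scaledFejerKernel,
    integral_scaledFejerKernel] at hbound
  refine le_of_mul_le_mul_left (hbound.trans_eq ?_) (mul_pos two_pos (Nat.cast_pos.mpr hm))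
  push_cast
  ring
end

section
/- Let ψ : [1,∞) → (0,∞) be positive, continuous, convex and decreasing with Σ_{k=1}^∞ ψ(k) < ∞. Let g(t) = ψ(t)t and suppose there are constants 0 < K₁ ≤ K₂ such that K₁ ≤ g(t)/(t|g'(t+0)|) ≤ K₂ for all t ≥ 1. Then there exist constants 0 < c ≤ C (depending only on K₁, K₂) such that for all n ∈ ℕ, c·ψ(n)·n ≤ Σ_{k=n}^∞ ψ(k) ≤ C·ψ(n)·n. -/
open Set Filter Topology

/-!
Write `g t = ψ t * t` and `D` for its right derivative; the hypothesis says `D ≠ 0` and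
`|D t| ≍ g t / t`. By convexity the right derivative of `ψ` is monotone, so `D = ψ + t ψ'₊` can
jump up but never down, and a continuous-induction argument shows that `D` cannot leave the
positive half-line once there. If `D t₀ > 0`, then `g` would be nondecreasing on `[t₀, ∞)`, i.e.
`ψ k ≥ g t₀ / k`, contradicting summability. Hence `-g/(K₁ t) ≤ D ≤ -g/(K₂ t)`, so that
`log g + log t / K₂` decreases and `log g + log t / K₁` increases, which gives
`2^(-1/K₁) g m ≤ g (2m) ≤ 2^(-1/K₂) g m`. The lower bound then follows from
`∑_{k=n}^{2n-1} ψ k ≥ n ψ (2n)`, the upper one from cutting the tail into dyadic blocks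
`[2^j n, 2^(j+1) n)`, each of sum at most `g (2^j n) ≤ 2^(-j/K₂) g n`.
-/

theorem ConvexOn.monotoneOn_of_hasDerivWithinAt_Ioi {f f' : ℝ → ℝ} {a : ℝ}
    (hfc : ConvexOn ℝ (Ici a) f) (hf' : ∀ x ∈ Ici a, HasDerivWithinAt f (f' x) (Ioi x) x) :
    MonotoneOn f' (Ici a) := by
  intro x hx y hy hxy
  rcases hxy.eq_or_lt with rfl | hxy
  · exact le_rfl
  calc f' x ≤ slope f x y := hfc.le_slope_of_hasDerivWithinAt_Ioi hx hy hxy (hf' x hx)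
    _ ≤ f' y := by
      refine ge_of_tendsto ((hasDerivWithinAt_iff_tendsto_slope' self_notMem_Ioi).1 (hf' y hy)) ?_
      filter_upwards [self_mem_nhdsWithin] with u (hyu : y < u)
      rw [slope_def_field, slope_def_field]
      exact hfc.slope_mono_adjacent hx (mem_Ici.2 ((mem_Ici.1 hy).trans hyu.le)) hxy hyu

theorem HasDerivWithinAt.of_mul_id {f : ℝ → ℝ} {s : Set ℝ} {t d : ℝ} (ht : t ≠ 0)
    (h : HasDerivWithinAt (fun x => f x * x) d s t) :
    HasDerivWithinAt f ((d - f t) / t) s t := by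
  refine ((h.div (hasDerivWithinAt_id t s) ht).congr_of_eventuallyEq ?_ ?_).congr_deriv ?_
  · filter_upwards [nhdsWithin_le_nhds (isOpen_ne.mem_nhds ht)] with x hx
    simp only [Pi.div_apply, id]
    field_simp
  · simp only [Pi.div_apply, id]
    field_simp
  · simp only [id]
    field_simp

theorem monotoneOn_of_hasDerivWithinAt_Ici_nonneg {S : Set ℝ} {f f' : ℝ → ℝ} (hS : S.OrdConnected)
    (hf : ContinuousOn f S) (hf' : ∀ x ∈ S, HasDerivWithinAt f (f' x) (Ici x) x)
    (hnonneg : ∀ x ∈ S, 0 ≤ f' x) : MonotoneOn f S := by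
  intro x hx y hy hxy
  have hsub : Icc x y ⊆ S := hS.out hx hy
  have hneg := image_le_of_deriv_right_le_deriv_boundary (f := fun z => -f z)
    (B := fun _ => -f x) (B' := fun _ => 0) (hf.mono hsub).neg
    (fun z hz => (hf' z (hsub (Ico_subset_Icc_self hz))).neg) le_rfl continuousOn_const
    (fun z _ => hasDerivWithinAt_const _ _ _)
    (fun z hz => neg_nonpos.2 (hnonneg z (hsub (Ico_subset_Icc_self hz)))) (right_mem_Icc.2 hxy)
  exact neg_le_neg_iff.1 hneg

theorem antitoneOn_of_hasDerivWithinAt_Ici_nonpos {S : Set ℝ} {f f' : ℝ → ℝ} (hS : S.OrdConnected)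
    (hf : ContinuousOn f S) (hf' : ∀ x ∈ S, HasDerivWithinAt f (f' x) (Ici x) x)
    (hnonpos : ∀ x ∈ S, f' x ≤ 0) : AntitoneOn f S := fun _ hx _ hy hxy =>
  neg_le_neg_iff.1 <| monotoneOn_of_hasDerivWithinAt_Ici_nonneg hS hf.neg
    (fun z hz => (hf' z hz).neg) (fun z hz => neg_nonneg.2 (hnonpos z hz)) hx hy hxy

theorem lowerSemicontinuousWithinAt_of_le {α : Type*} [TopologicalSpace α] {f φ : α → ℝ}
    {s : Set α} {x : α} (hφ : ContinuousWithinAt φ s x) (hx : φ x = f x)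
    (hle : ∀ y ∈ s, φ y ≤ f y) : LowerSemicontinuousWithinAt f s x := by
  intro c hc
  filter_upwards [hφ.eventually (lt_mem_nhds (hx ▸ hc)), self_mem_nhdsWithin] with y hy hys
  exact hy.trans_le (hle y hys)

theorem upperSemicontinuousWithinAt_of_le {α : Type*} [TopologicalSpace α] {f φ : α → ℝ}
    {s : Set α} {x : α} (hφ : ContinuousWithinAt φ s x) (hx : φ x = f x)
    (hle : ∀ y ∈ s, f y ≤ φ y) : UpperSemicontinuousWithinAt f s x := by
  intro c hc
  filter_upwards [hφ.eventually (gt_mem_nhds (hx ▸ hc)), self_mem_nhdsWithin] with y hy hys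
  exact (hle y hys).trans_lt hy

theorem pos_of_semicontinuous_of_ne_zero {f : ℝ → ℝ} {a : ℝ} (ha : 0 < f a)
    (hne : ∀ x, a ≤ x → f x ≠ 0)
    (hleft : ∀ x, a < x → UpperSemicontinuousWithinAt f (Icc a x) x)
    (hright : ∀ x, a ≤ x → LowerSemicontinuousWithinAt f (Ici x) x) :
    ∀ x, a ≤ x → 0 < f x := by
  -- Continuous induction on the closed set of lower bounds of `{y ≥ a | f y ≤ 0}`.
  set E := ⋂ y ∈ {y | a ≤ y ∧ f y ≤ 0}, Iic y
  have hE : IsClosed E := isClosed_biInter fun _ _ => isClosed_Iic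
  have mem_E : ∀ x, x ∈ E ↔ ∀ y, a ≤ y → f y ≤ 0 → x ≤ y := by
    intro x; simp [E]
  have pos_of_mem : ∀ x ∈ E, a ≤ x → 0 < f x := by
    intro x hxE hax
    rcases hax.eq_or_lt with rfl | hax
    · exact ha
    by_contra! hfx
    have hneg : f x < 0 := hfx.lt_of_ne (hne x hax.le)
    have h := (hleft x hax 0 hneg).filter_mono (nhdsWithin_mono _ Ioo_subset_Icc_self)
    rw [nhdsWithin_Ioo_eq_nhdsLT hax] at h
    obtain ⟨y, hfy, hay, hyx⟩ := (h.and (Ioo_mem_nhdsLT hax)).exists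
    exact hyx.not_ge ((mem_E x).1 hxE y hay.le hfy.le)
  intro b hab
  refine pos_of_mem b ?_ hab
  refine (hE.inter isClosed_Icc).mem_of_ge_of_forall_exists_gt ?_ hab ?_
  · exact (mem_E a).2 fun y hy _ => hy
  · rintro x ⟨hxE, hax, hxb⟩
    obtain ⟨u, hxu, hu⟩ := mem_nhdsGE_iff_exists_Ico_subset.1
      (hright x hax 0 (pos_of_mem x hxE hax))
    refine ⟨min u b, (mem_E _).2 fun y hay hfy => ?_, lt_min hxu hxb, min_le_right _ _⟩
    by_contra! hy
    rcases lt_or_ge y x with hyx | hxy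
    · exact hyx.not_ge ((mem_E x).1 hxE y hay hfy)
    · exact (hu ⟨hxy, hy.trans_le (min_le_left _ _)⟩ : 0 < f y).not_ge hfy

theorem not_summable_of_le_mul_self {f : ℝ → ℝ} {a c : ℝ} (hc : 0 < c)
    (h : ∀ t, a ≤ t → c ≤ f t * t) : ¬Summable (fun k : ℕ => f k) := by
  intro hf
  apply Real.not_summable_one_div_natCast
  refine (hf.mul_left c⁻¹).of_norm_bounded_eventually ?_
  rw [Nat.cofinite_eq_atTop]
  filter_upwards [eventually_ge_atTop ⌈a⌉₊, eventually_gt_atTop 0] with k hak hk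
  have hk' : (0 : ℝ) < k := by exact_mod_cast hk
  rw [Real.norm_of_nonneg (by positivity), div_le_iff₀ hk', mul_assoc, le_inv_mul_iff₀ hc, mul_one]
  exact h k (Nat.ceil_le.1 hak)

theorem Summable.comp_natCast_add {f : ℝ → ℝ} (hf : Summable (fun k : ℕ => f k)) (m : ℕ) :
    Summable (fun k : ℕ => f (m + k)) := by
  simpa [add_comm] using (summable_nat_add_iff m).2 hf

section Tails

variable {f : ℝ → ℝ}

theorem natCast_mul_le_tsum_nat_add (hf : AntitoneOn f (Ici 1)) (hf0 : ∀ t, 1 ≤ t → 0 ≤ f t)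
    (hs : Summable (fun k : ℕ => f k)) {n : ℕ} (hn : 1 ≤ n) :
    n * f (2 * n) ≤ ∑' k : ℕ, f (n + k) := by
  have hn1 : (1 : ℝ) ≤ n := by exact_mod_cast hn
  calc (n : ℝ) * f (2 * n) = ∑ _i ∈ Finset.range n, f (2 * n) := by simp
    _ ≤ ∑ i ∈ Finset.range n, f (n + i) := by
      refine Finset.sum_le_sum fun i hi => hf (mem_Ici.2 ?_) (mem_Ici.2 ?_) ?_
      · have : (0 : ℝ) ≤ i := i.cast_nonneg
        linarith
      · linarith
      · have : (i : ℝ) < n := by exact_mod_cast Finset.mem_range.1 hi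
        linarith
    _ ≤ ∑' k : ℕ, f (n + k) :=
      (hs.comp_natCast_add n).sum_le_tsum _ fun k _ => hf0 _ (by linarith [k.cast_nonneg (α := ℝ)])

theorem tsum_nat_add_le_add_tsum_two_mul (hf : AntitoneOn f (Ici 1))
    (hs : Summable (fun k : ℕ => f k)) {m : ℕ} (hm : 1 ≤ m) :
    ∑' k : ℕ, f (m + k) ≤ f m * m + ∑' k : ℕ, f (↑(2 * m) + k) := by
  have hm1 : (1 : ℝ) ≤ m := by exact_mod_cast hm
  have hhead : ∑ i ∈ Finset.range m, f (m + i) ≤ f m * m := by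
    calc ∑ i ∈ Finset.range m, f (m + i) ≤ ∑ _i ∈ Finset.range m, f m :=
          Finset.sum_le_sum fun i _ => by
            have : (0 : ℝ) ≤ i := i.cast_nonneg
            exact hf (mem_Ici.2 hm1) (mem_Ici.2 (by linarith)) (by linarith)
      _ = f m * m := by simp [mul_comm]
  have htail : ∑' i : ℕ, f (m + ↑(i + m)) = ∑' k : ℕ, f (↑(2 * m) + k) :=
    tsum_congr fun i => by push_cast; ring_nf
  rw [← (hs.comp_natCast_add m).sum_add_tsum_nat_add m, htail]
  linarith

theorem tsum_nat_add_le_of_two_mul_le {q : ℝ} (hf : AntitoneOn f (Ici 1))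
    (hf0 : ∀ t, 1 ≤ t → 0 ≤ f t) (hs : Summable (fun k : ℕ => f k)) (hq : q < 1)
    (hdecay : ∀ m : ℕ, 1 ≤ m → f ↑(2 * m) * ↑(2 * m) ≤ q * (f m * m)) {n : ℕ} (hn : 1 ≤ n) :
    ∑' k : ℕ, f (n + k) ≤ f n * n / (1 - q) := by
  have hq' : 0 < 1 - q := by linarith
  -- `V` does not decrease along `m ↦ 2 * m` and is bounded by tails tending to `0`.
  set V : ℕ → ℝ := fun m => ∑' k : ℕ, f (m + k) - f m * m / (1 - q) with hV
  have hstep : ∀ m, 1 ≤ m → V m ≤ V (2 * m) := by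
    intro m hm
    have hdiv : f ↑(2 * m) * ↑(2 * m) / (1 - q) ≤ f m * m / (1 - q) - f m * m := by
      calc _ ≤ q * (f m * m) / (1 - q) := div_le_div_of_nonneg_right (hdecay m hm) hq'.le
        _ = _ := by field_simp; ring
    linarith [tsum_nat_add_le_add_tsum_two_mul hf hs hm]
  have hiter : ∀ J, V n ≤ V (2 ^ J * n) := by
    intro J
    induction J with
    | zero => simp
    | succ J ih =>
      rw [pow_succ, mul_comm _ 2, mul_assoc]
      exact ih.trans (hstep _ (le_mul_of_one_le_of_le Nat.one_le_two_pow hn))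
  have hV_le : ∀ m : ℕ, 1 ≤ m → V m ≤ ∑' k : ℕ, f (m + k) := fun m hm =>
    sub_le_self _ (div_nonneg (mul_nonneg (hf0 m (by exact_mod_cast hm)) m.cast_nonneg) hq'.le)
  have htail : Tendsto (fun m : ℕ => ∑' k : ℕ, f (m + k)) atTop (𝓝 0) := by
    simpa [add_comm] using tendsto_sum_nat_add (fun k : ℕ => f k)
  have hpow : Tendsto (fun J : ℕ => 2 ^ J * n) atTop atTop :=
    tendsto_atTop_mono (fun J => Nat.le_mul_of_pos_right _ hn)
      (tendsto_pow_atTop_atTop_of_one_lt one_lt_two)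
  have hVn : V n ≤ 0 := ge_of_tendsto' (htail.comp hpow) fun J =>
    (hiter J).trans (hV_le _ (le_mul_of_one_le_of_le Nat.one_le_two_pow hn))
  simp only [hV] at hVn
  linarith

end Tails

section RightDerivative

variable {ψ D : ℝ → ℝ}

theorem rightDeriv_mul_id_neg (hψpos : ∀ t ∈ Ici (1 : ℝ), 0 < ψ t)
    (hψcont : ContinuousOn ψ (Ici 1)) (hψconv : ConvexOn ℝ (Ici 1) ψ)
    (hsum : Summable (fun k : ℕ => ψ k))
    (hD : ∀ t, 1 ≤ t → HasDerivWithinAt (fun x => ψ x * x) (D t) (Ici t) t)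
    (hDne : ∀ t, 1 ≤ t → D t ≠ 0) {t₀ : ℝ} (ht₀ : 1 ≤ t₀) : D t₀ < 0 := by
  -- `P` is the right derivative of `ψ`. Being monotone, it puts `D s = P s * s + ψ s` below the
  -- continuous function `P T * s + ψ s` for `s ≤ T` and above it for `s ≥ T`.
  set P : ℝ → ℝ := fun t => (D t - ψ t) / t
  have hP : MonotoneOn P (Ici 1) := hψconv.monotoneOn_of_hasDerivWithinAt_Ioi fun t ht =>
    ((hD t ht).of_mul_id (by linarith [mem_Ici.1 ht])).mono Ioi_subset_Ici_self
  have hDP : ∀ t, 1 ≤ t → D t = P t * t + ψ t := fun t ht => by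
    simp only [P]; field_simp [show t ≠ 0 by linarith]; ring
  have hφ : ∀ T, 1 ≤ T → ∀ s ⊆ Ici 1, ContinuousWithinAt (fun x => P T * x + ψ x) s T :=
    fun T hT s hs => (continuousWithinAt_id.const_mul _).add ((hψcont T hT).mono hs)
  by_contra! hnonneg
  have hpos : ∀ t, t₀ ≤ t → 0 < D t := by
    refine pos_of_semicontinuous_of_ne_zero (hnonneg.lt_of_ne' (hDne t₀ ht₀))
      (fun x hx => hDne x (ht₀.trans hx)) (fun T hT => ?_) (fun T hT => ?_)
    · have hT : 1 ≤ T := by linarith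
      refine upperSemicontinuousWithinAt_of_le (hφ T hT _ fun x hx => ht₀.trans hx.1)
        (hDP T hT).symm fun s hs => ?_
      rw [hDP s (ht₀.trans hs.1)]
      linarith [mul_le_mul_of_nonneg_right (hP (mem_Ici.2 (ht₀.trans hs.1)) (mem_Ici.2 hT) hs.2)
        (show (0 : ℝ) ≤ s by linarith [hs.1])]
    · have hT : 1 ≤ T := ht₀.trans hT
      refine lowerSemicontinuousWithinAt_of_le (hφ T hT _ fun x hx => hT.trans hx)
        (hDP T hT).symm fun s hs => ?_
      rw [hDP s (hT.trans hs)]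
      linarith [mul_le_mul_of_nonneg_right (hP (mem_Ici.2 hT) (mem_Ici.2 (hT.trans hs)) hs)
        (show (0 : ℝ) ≤ s by linarith [mem_Ici.1 hs])]
  have hmono : MonotoneOn (fun x => ψ x * x) (Ici t₀) :=
    monotoneOn_of_hasDerivWithinAt_Ici_nonneg ordConnected_Ici
      ((hψcont.mono (Ici_subset_Ici.2 ht₀)).mul continuousOn_id)
      (fun x hx => hD x (ht₀.trans hx)) fun x hx => (hpos x hx).le
  exact not_summable_of_le_mul_self (mul_pos (hψpos t₀ ht₀) (by linarith))
    (fun t ht => hmono self_mem_Ici ht ht) hsum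

theorem hasDerivWithinAt_log_mul_id_add {K t : ℝ} (hψ : 0 < ψ t) (ht : 0 < t)
    (hD : HasDerivWithinAt (fun x => ψ x * x) (D t) (Ici t) t) :
    HasDerivWithinAt (fun x => Real.log (ψ x * x) + Real.log x / K)
      ((D t + ψ t / K) / (ψ t * t)) (Ici t) t := by
  refine ((hD.log (by positivity)).add
    ((Real.hasDerivAt_log ht.ne').hasDerivWithinAt.div_const K)).congr_deriv ?_
  field_simp

theorem continuousOn_log_mul_id_add {K : ℝ} (hψpos : ∀ t ∈ Ici (1 : ℝ), 0 < ψ t)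
    (hψcont : ContinuousOn ψ (Ici 1)) :
    ContinuousOn (fun x => Real.log (ψ x * x) + Real.log x / K) (Ici 1) := by
  have hpos : ∀ t ∈ Ici (1 : ℝ), 0 < t := fun t ht => zero_lt_one.trans_le ht
  exact ((hψcont.mul continuousOn_id).log fun t ht => (mul_pos (hψpos t ht) (hpos t ht)).ne').add
    ((Real.continuousOn_log.mono fun t ht => (hpos t ht).ne').div_const K)

theorem mul_id_two_mul_le {K : ℝ} (hψpos : ∀ t ∈ Ici (1 : ℝ), 0 < ψ t)
    (hψcont : ContinuousOn ψ (Ici 1))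
    (hD : ∀ t, 1 ≤ t → HasDerivWithinAt (fun x => ψ x * x) (D t) (Ici t) t)
    (hDle : ∀ t, 1 ≤ t → D t ≤ -(ψ t / K)) {m : ℝ} (hm : 1 ≤ m) :
    ψ (2 * m) * (2 * m) ≤ Real.exp (-(Real.log 2 / K)) * (ψ m * m) := by
  have hanti := antitoneOn_of_hasDerivWithinAt_Ici_nonpos ordConnected_Ici
    (continuousOn_log_mul_id_add (K := K) hψpos hψcont)
    (fun t ht => hasDerivWithinAt_log_mul_id_add (hψpos t ht) (by linarith [mem_Ici.1 ht])
      (hD t ht))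
    fun t ht => div_nonpos_of_nonpos_of_nonneg (by linarith [hDle t ht])
      (mul_pos (hψpos t ht) (by linarith [mem_Ici.1 ht])).le
  have key := hanti (mem_Ici.2 hm) (mem_Ici.2 (by linarith)) (by linarith : m ≤ 2 * m)
  simp only at key
  rw [Real.log_mul two_ne_zero (by linarith), add_div] at key
  rw [← Real.log_le_log_iff (mul_pos (hψpos _ (mem_Ici.2 (by linarith))) (by linarith))
    (by have := hψpos m hm; positivity), Real.log_mul (Real.exp_pos _).ne'
    (mul_pos (hψpos m hm) (by linarith)).ne', Real.log_exp]
  linarith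

theorem le_mul_id_two_mul {K : ℝ} (hψpos : ∀ t ∈ Ici (1 : ℝ), 0 < ψ t)
    (hψcont : ContinuousOn ψ (Ici 1))
    (hD : ∀ t, 1 ≤ t → HasDerivWithinAt (fun x => ψ x * x) (D t) (Ici t) t)
    (hDge : ∀ t, 1 ≤ t → -(ψ t / K) ≤ D t) {m : ℝ} (hm : 1 ≤ m) :
    Real.exp (-(Real.log 2 / K)) * (ψ m * m) ≤ ψ (2 * m) * (2 * m) := by
  have hmono := monotoneOn_of_hasDerivWithinAt_Ici_nonneg ordConnected_Ici
    (continuousOn_log_mul_id_add (K := K) hψpos hψcont)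
    (fun t ht => hasDerivWithinAt_log_mul_id_add (hψpos t ht) (by linarith [mem_Ici.1 ht])
      (hD t ht))
    fun t ht => div_nonneg (by linarith [hDge t ht])
      (mul_pos (hψpos t ht) (by linarith [mem_Ici.1 ht])).le
  have key := hmono (mem_Ici.2 hm) (mem_Ici.2 (by linarith)) (by linarith : m ≤ 2 * m)
  simp only at key
  rw [Real.log_mul two_ne_zero (by linarith), add_div] at key
  rw [← Real.log_le_log_iff (by have := hψpos m hm; positivity)
    (mul_pos (hψpos _ (mem_Ici.2 (by linarith))) (by linarith)), Real.log_mul (Real.exp_pos _).ne'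
    (mul_pos (hψpos m hm) (by linarith)).ne', Real.log_exp]
  linarith

end RightDerivative

theorem rightDeriv_bounds_of_characteristic {p t d K₁ K₂ : ℝ} (ht : 0 < t) (hd : d < 0)
    (hK₁ : 0 < K₁) (h : K₁ ≤ p * t / (t * |d|) ∧ p * t / (t * |d|) ≤ K₂) :
    -(p / K₁) ≤ d ∧ d ≤ -(p / K₂) := by
  have hd' : 0 < -d := neg_pos.2 hd
  rw [abs_of_neg hd, mul_comm t, mul_div_mul_right _ _ ht.ne', le_div_iff₀ hd',
    div_le_iff₀ hd'] at h
  have hK₂ : 0 < K₂ := by nlinarith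
  constructor
  · rw [neg_le, le_div_iff₀ hK₁]
    linarith
  · rw [le_neg, div_le_iff₀ hK₂]
    linarith

/-- If `g(t) = ψ(t) t` has its characteristic `g(t)/(t |g'(t+0)|)` bounded between
`K₁` and `K₂` on `[1,∞)` (i.e. `g ∈ 𝔐_C`), then `∑_{k=n}^∞ ψ(k) ≍ ψ(n) n`. -/
theorem stmt_12 (ψ : ℝ → ℝ)
    (hψpos : ∀ t ∈ Ici (1 : ℝ), 0 < ψ t)
    (hψcont : ContinuousOn ψ (Ici (1 : ℝ)))
    (hψconv : ConvexOn ℝ (Ici (1 : ℝ)) ψ)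
    (hψdec : AntitoneOn ψ (Ici (1 : ℝ)))
    (hsum : Summable (fun k : ℕ => ψ k))
    (g : ℝ → ℝ) (hg : ∀ t, g t = ψ t * t)
    (K₁ K₂ : ℝ) (hK₁ : 0 < K₁) (hK₁₂ : K₁ ≤ K₂)
    (hchar : ∀ t : ℝ, 1 ≤ t →
      K₁ ≤ g t / (t * |derivWithin g (Ici t) t|) ∧
      g t / (t * |derivWithin g (Ici t) t|) ≤ K₂) :
    ∃ c C : ℝ, 0 < c ∧ c ≤ C ∧ ∀ n : ℕ, 1 ≤ n →
      c * (ψ n * n) ≤ (∑' k : ℕ, ψ (n + k)) ∧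
      (∑' k : ℕ, ψ (n + k)) ≤ C * (ψ n * n) := by
  obtain rfl : g = fun t => ψ t * t := funext hg
  have hK₂ : 0 < K₂ := hK₁.trans_le hK₁₂
  have hDne : ∀ t, 1 ≤ t → derivWithin (fun x => ψ x * x) (Ici t) t ≠ 0 := fun t ht h0 => by
    have := (hchar t ht).1
    rw [h0, abs_zero, mul_zero, div_zero] at this
    linarith
  have hD : ∀ t, 1 ≤ t → HasDerivWithinAt (fun x => ψ x * x)
      (derivWithin (fun x => ψ x * x) (Ici t) t) (Ici t) t := fun t ht =>
    (differentiableWithinAt_of_derivWithin_ne_zero (hDne t ht)).hasDerivWithinAt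
  have hbounds := fun t (ht : 1 ≤ t) => rightDeriv_bounds_of_characteristic (by linarith)
    (rightDeriv_mul_id_neg hψpos hψcont hψconv hsum hD hDne ht) hK₁ (hchar t ht)
  set q := Real.exp (-(Real.log 2 / K₂))
  have hq : q < 1 := Real.exp_lt_one_iff.2 (neg_neg_of_pos (div_pos (Real.log_pos one_lt_two) hK₂))
  refine ⟨Real.exp (-(Real.log 2 / K₁)) / 2, 1 / (1 - q), by positivity, ?_, fun n hn => ⟨?_, ?_⟩⟩
  · have : Real.exp (-(Real.log 2 / K₁)) ≤ 1 :=
      Real.exp_le_one_iff.2 (neg_nonpos.2 (by positivity))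
    have : 1 ≤ 1 / (1 - q) := one_le_one_div (by linarith) (sub_le_self _ (Real.exp_pos _).le)
    linarith
  · calc Real.exp (-(Real.log 2 / K₁)) / 2 * (ψ n * n) ≤ ψ (2 * n) * (2 * n) / 2 := by
          linarith [le_mul_id_two_mul hψpos hψcont hD (fun t ht => (hbounds t ht).1)
            (show (1 : ℝ) ≤ n by exact_mod_cast hn)]
      _ = n * ψ (2 * n) := by ring
      _ ≤ ∑' k : ℕ, ψ (n + k) :=
          natCast_mul_le_tsum_nat_add hψdec (fun t ht => (hψpos t ht).le) hsum hn
  · calc ∑' k : ℕ, ψ (n + k) ≤ ψ n * n / (1 - q) :=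
          tsum_nat_add_le_of_two_mul_le hψdec (fun t ht => (hψpos t ht).le) hsum hq
            (fun m hm => by
              push_cast
              exact mul_id_two_mul_le hψpos hψcont hD (fun t ht => (hbounds t ht).2)
                (by exact_mod_cast hm)) hn
      _ = 1 / (1 - q) * (ψ n * n) := by ring
end
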